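/- Let α > 0 and let q_1 > q_2 > q_3 > q_4 be real numbers satisfying 2(q_1 − q_2) > q_1 − q_4. Then there exist positive masses m_1, m_2, m_3, m_4 > 0 and λ < 0 such that q is a central configuration: λ m_j (q_j − q_0) = −α ∑_{k≠j} m_j m_k Q_{jk} for j = 1, …, 4, where q_0 = (∑_j m_j q_j)/(∑_j m_j). -/
import Mathlib

/- Auxiliary: existence of a translation parameter `Y` making all four
cofactor masses positive. -/
set_option maxHeartbeats 800000 in

lemma keyY (A B C a b c d e f : ℝ)
    (hA : 0 < A) (hB : 0 < B) (hC : 0 < C) (hgap : B + C < A)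
    (ha : 0 < a) (hb : 0 < b) (hc : 0 < c) (hd : 0 < d) (he : 0 < e) (hf : 0 < f)
    (hba : b < a) (hcb : c < b) (hae : a < e) (hed : e < d) (hef : e < f)
    (hbe : b < e) (hce : c < e)
    (hbeaf : b * e < a * f)
    (hA1 : a * A < e * (B + C)) :
    ∃ Y : ℝ,
      0 < e * (Y + C) - f * (Y + B + C) - d * Y ∧
      0 < f * (Y + A + B + C) - c * (Y + C) + b * Y ∧
      0 < c * (Y + B + C) - e * (Y + A + B + C) - a * Y ∧
      0 < d * (Y + A + B + C) - b * (Y + B + C) + a * (Y + C) := by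
  have hD1 : (0:ℝ) < f + d - e := by linarith
  have hD2 : (0:ℝ) < f + b - c := by linarith
  have hD3 : (0:ℝ) < e + a - c := by linarith
  have hD4 : (0:ℝ) < d + a - b := by linarith
  -- G1 : t3 < t1
  have hG1 : (c*(B+C) - e*(A+B+C)) * (f+d-e) < (e*C - f*(B+C)) * (e+a-c) := by
    have hX : 0 < (e*C - f*(B+C)) * (e+a-c) - (c*(B+C) - e*(A+B+C)) * (f+d-e) := by
      rcases lt_or_ge 0 ((e*C - f*(B+C)) * (e+a-c) - (c*(B+C) - e*(A+B+C)) * (f+d-e)) with h|h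
      · exact h
      · exfalso
        have t1 : 0 < A*A*e*(d-e) := mul_pos (mul_pos (mul_pos hA hA) he) (by linarith)
        have t2 : 0 < A*B*(d-e)*(e-c) :=
          mul_pos (mul_pos (mul_pos hA hB) (by linarith)) (by linarith)
        have t3 : 0 < A*C*d*(e-c) := mul_pos (mul_pos (mul_pos hA hC) hd) (by linarith)
        have t4 : 0 < A*C*(a*e) := mul_pos (mul_pos hA hC) (mul_pos ha he)
        have t5 : 0 < e*f*(A-(B+C))*(A+(B+C)) :=
          mul_pos (mul_pos (mul_pos he hf) (by linarith)) (by linarith)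
        have t6 : 0 < f*(B+C)*(e*(B+C)-a*A) :=
          mul_pos (mul_pos hf (by linarith)) (by linarith)
        have hAX : A * ((e*C - f*(B+C)) * (e+a-c) - (c*(B+C) - e*(A+B+C)) * (f+d-e)) ≤ 0 :=
          mul_nonpos_of_nonneg_of_nonpos hA.le h
        have key : A * ((e*C - f*(B+C)) * (e+a-c) - (c*(B+C) - e*(A+B+C)) * (f+d-e))
            = A*A*e*(d-e) + A*B*(d-e)*(e-c) + A*C*d*(e-c) + A*C*(a*e)
              + e*f*(A-(B+C))*(A+(B+C)) + f*(B+C)*(e*(B+C)-a*A) := by ring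
      
        linarith [key]
    linarith
  -- G2 : t2 < t3
  have hG2 : (c*C - f*(A+B+C)) * (e+a-c) < (c*(B+C) - e*(A+B+C)) * (f+b-c) := by
    have t1 : 0 < A*(f-e)*(a-c) := mul_pos (mul_pos hA (by linarith)) (by linarith)
    have t2 : 0 < A*e*(a-b) := mul_pos (mul_pos hA he) (by linarith)
    have t3 : 0 < C*(a-b)*(f-c) := mul_pos (mul_pos hC (by linarith)) (by linarith)
    have t4 : 0 < C*b*(f-e) := mul_pos (mul_pos hC hb) (by linarith)
    have t5 : 0 < B*(a*f-b*e) := mul_pos hB (by linarith)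
    have t6 : 0 < B*c*(e+b-c) := mul_pos (mul_pos hB hc) (by linarith)
    have key : (c*(B+C) - e*(A+B+C)) * (f+b-c) - (c*C - f*(A+B+C)) * (e+a-c)
        = A*(f-e)*(a-c) + A*e*(a-b) + C*(a-b)*(f-c) + C*b*(f-e)
          + B*(a*f-b*e) + B*c*(e+b-c) := by ring
    linarith [key]
  -- G3 : t4 < t3
  have hG3 : (b*(B+C) - a*C - d*(A+B+C)) * (e+a-c) < (c*(B+C) - e*(A+B+C)) * (d+a-b) := by
    have t1 : 0 < (d-e)*(a*(A+B+C) - A*c) := by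
      have : 0 < a*(A+B+C) - A*c := by nlinarith
      exact mul_pos (by linarith) this
    have t2 : 0 < (b-c)*(A*e - a*B) := by
      have : 0 < A*e - a*B := by nlinarith
      exact mul_pos (by linarith) this
    have t3 : 0 < a*C*(a+e-b) := mul_pos (mul_pos ha hC) (by linarith)
    have key : (c*(B+C) - e*(A+B+C)) * (d+a-b) - (b*(B+C) - a*C - d*(A+B+C)) * (e+a-c)
        = (d-e)*(a*(A+B+C) - A*c) + (b-c)*(A*e - a*B) + a*C*(a+e-b) := by ring
    linarith [key]
  -- thresholds
  set T1 := (e*C - f*(B+C)) / (f+d-e) with hT1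
  set T2 := (c*C - f*(A+B+C)) / (f+b-c) with hT2
  set T3 := (c*(B+C) - e*(A+B+C)) / (e+a-c) with hT3
  set T4 := (b*(B+C) - a*C - d*(A+B+C)) / (d+a-b) with hT4
  have hT31 : T3 < T1 := by
    rw [hT3, hT1, div_lt_div_iff₀ hD3 hD1]; exact hG1
  have hT23 : T2 < T3 := by
    rw [hT2, hT3, div_lt_div_iff₀ hD2 hD3]; exact hG2
  have hT43 : T4 < T3 := by
    rw [hT4, hT3, div_lt_div_iff₀ hD4 hD3]; exact hG3
  set Y := (max T2 T4 + T3) / 2 with hY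
  have hmax : max T2 T4 < T3 := max_lt hT23 hT43
  have hY3 : Y < T3 := by rw [hY]; linarith
  have hY2 : T2 < Y := by

    have := le_max_left T2 T4
    rw [hY]; linarith
  have hY4 : T4 < Y := by
    have := le_max_right T2 T4
    rw [hY]; linarith
  have hY1 : Y < T1 := hY3.trans hT31
  have e1 : Y * (f+d-e) < e*C - f*(B+C) := (lt_div_iff₀ hD1).1 hY1
  have e2 : c*C - f*(A+B+C) < Y * (f+b-c) := (div_lt_iff₀ hD2).1 hY2
  have e3 : Y * (e+a-c) < c*(B+C) - e*(A+B+C) := (lt_div_iff₀ hD3).1 hY3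
  have e4 : b*(B+C) - a*C - d*(A+B+C) < Y * (d+a-b) := (div_lt_iff₀ hD4).1 hY4
  exact ⟨Y, by linarith [e1], by linarith [e2], by linarith [e3], by linarith [e4]⟩

/- STATEMENT 19: an ordered configuration of four collinear bodies with
`2(q_1 − q_2) > q_1 − q_4` admits positive masses and `λ < 0` making it a
central configuration. -/
set_option maxHeartbeats 1000000 in
theorem stmt19 (α : ℝ) (hα : 0 < α)
    (q : Fin 4 → ℝ) (hq : StrictAnti q)
    (hgap : 2 * (q 0 - q 1) > q 0 - q 3)
    (Q : Matrix (Fin 4) (Fin 4) ℝ)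
    (hQ : ∀ i j, Q i j = (q i - q j) * |q i - q j| ^ (-α - 2)) :
    ∃ (m : Fin 4 → ℝ) (lam : ℝ), (∀ k, 0 < m k) ∧ lam < 0 ∧
      ∀ i, lam * m i * (q i - (∑ k, m k * q k) / (∑ k, m k)) =
        -α * ∑ k ∈ Finset.univ.erase i, m i * m k * Q i k := by
  have h10 : q 1 < q 0 := hq (by decide)
  have h21 : q 2 < q 1 := hq (by decide)
  have h32 : q 3 < q 2 := hq (by decide)
  have h20 : q 2 < q 0 := h21.trans h10
  have h30 : q 3 < q 0 := h32.trans h20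
  have h31 : q 3 < q 1 := h32.trans h21
  -- distances
  have hA : (0:ℝ) < q 0 - q 1 := by linarith
  have hB : (0:ℝ) < q 1 - q 2 := by linarith
  have hC : (0:ℝ) < q 2 - q 3 := by linarith
  have hgap' : (q 1 - q 2) + (q 2 - q 3) < q 0 - q 1 := by linarith
  -- power values
  set a := (q 0 - q 1) ^ (-α - 1) with ha_def
  set b := (q 0 - q 2) ^ (-α - 1) with hb_def
  set c := (q 0 - q 3) ^ (-α - 1) with hc_def
  set d := (q 1 - q 2) ^ (-α - 1) with hd_def
  set e := (q 1 - q 3) ^ (-α - 1) with he_def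
  set f := (q 2 - q 3) ^ (-α - 1) with hf_def
  have hneg : (-α - 1 : ℝ) < 0 := by linarith
  have ha : 0 < a := Real.rpow_pos_of_pos hA _
  have hb : 0 < b := Real.rpow_pos_of_pos (by linarith) _
  have hc : 0 < c := Real.rpow_pos_of_pos (by linarith) _
  have hd : 0 < d := Real.rpow_pos_of_pos hB _
  have he : 0 < e := Real.rpow_pos_of_pos (by linarith) _
  have hf : 0 < f := Real.rpow_pos_of_pos hC _
  have anti : ∀ x y : ℝ, 0 < x → x < y → y ^ (-α-1) < x ^ (-α-1) := fun x y hx hxy =>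
    Real.rpow_lt_rpow_of_neg hx hxy hneg
  have hba : b < a := anti _ _ hA (by linarith)
  have hcb : c < b := anti _ _ (by linarith) (by linarith)
  have hae : a < e := anti _ _ (by linarith) (by linarith)
  have hed : e < d := anti _ _ hB (by linarith)
  have hef : e < f := anti _ _ hC (by linarith)
  have hbe : b < e := anti _ _ (by linarith) (by linarith)
  have hce : c < e := anti _ _ (by linarith) (by linarith)
  have hbeaf : b * e < a * f := by
    have h1 : b * e = ((q 0 - q 2) * (q 1 - q 3)) ^ (-α - 1) := by
      rw [hb_def, he_def, Real.mul_rpow (by linarith) (by linarith)]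
    have h2 : a * f = ((q 0 - q 1) * (q 2 - q 3)) ^ (-α - 1) := by
      rw [ha_def, hf_def, Real.mul_rpow (by linarith) (by linarith)]
    rw [h1, h2]
    refine anti _ _ (by nlinarith) (by nlinarith)
  have hpow1 : ∀ x : ℝ, 0 < x → x ^ (-α - 1) * x = x ^ (-α) := by
    intro x hx
    have h := (Real.rpow_add hx (-α - 1) 1).symm
    rw [Real.rpow_one] at h
    calc x ^ (-α - 1) * x = x ^ (-α - 1 + 1) := h
      _ = x ^ (-α) := by norm_num
  have hA1 : a * (q 0 - q 1) < e * ((q 1 - q 2) + (q 2 - q 3)) := by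
    have h1 : a * (q 0 - q 1) = (q 0 - q 1) ^ (-α) := by rw [ha_def]; exact hpow1 _ hA
    have h2 : e * ((q 1 - q 2) + (q 2 - q 3)) = (q 1 - q 3) ^ (-α) := by
      rw [show (q 1 - q 2) + (q 2 - q 3) = q 1 - q 3 by ring, he_def]
      exact hpow1 _ (by linarith)
    rw [h1, h2]
    exact Real.rpow_lt_rpow_of_neg (by linarith) (by linarith) (by linarith)
  obtain ⟨Y, hm0, hm1, hm2, hm3⟩ :=
    keyY (q 0 - q 1) (q 1 - q 2) (q 2 - q 3) a b c d e f hA hB hC hgap'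
      ha hb hc hd he hf hba hcb hae hed hef hbe hce hbeaf hA1
  set m : Fin 4 → ℝ :=
    ![e * (Y + (q 2 - q 3)) - f * (Y + (q 1 - q 2) + (q 2 - q 3)) - d * Y,
      f * (Y + (q 0 - q 1) + (q 1 - q 2) + (q 2 - q 3)) - c * (Y + (q 2 - q 3)) + b * Y,
      c * (Y + (q 1 - q 2) + (q 2 - q 3)) - e * (Y + (q 0 - q 1) + (q 1 - q 2) + (q 2 - q 3)) - a * Y,
      d * (Y + (q 0 - q 1) + (q 1 - q 2) + (q 2 - q 3)) - b * (Y + (q 1 - q 2) + (q 2 - q 3)) + a * (Y + (q 2 - q 3))] with hm_def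
  have e0 : m 0 = e * (Y + (q 2 - q 3)) - f * (Y + (q 1 - q 2) + (q 2 - q 3)) - d * Y := rfl
  have e1 : m 1 = f * (Y + (q 0 - q 1) + (q 1 - q 2) + (q 2 - q 3)) - c * (Y + (q 2 - q 3)) + b * Y := rfl
  have e2 : m 2 = c * (Y + (q 1 - q 2) + (q 2 - q 3)) - e * (Y + (q 0 - q 1) + (q 1 - q 2) + (q 2 - q 3)) - a * Y := rfl
  have e3 : m 3 = d * (Y + (q 0 - q 1) + (q 1 - q 2) + (q 2 - q 3)) - b * (Y + (q 1 - q 2) + (q 2 - q 3)) + a * (Y + (q 2 - q 3)) := rfl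
  have hPf : 0 < a * f - b * e + c * d := by
    have := mul_pos hc hd; linarith
  have hSsum : ∑ k, m k = m 0 + m 1 + m 2 + m 3 := Fin.sum_univ_four m
  have hSpos : 0 < ∑ k, m k := by
    rw [hSsum, e0, e1, e2, e3]; linarith
  have hnum : ∑ k, m k * q k = -(Y - q 3) * ∑ k, m k := by
    rw [Fin.sum_univ_four (fun k => m k * q k), hSsum, e0, e1, e2, e3]; ring
  have hq0val : (∑ k, m k * q k) / (∑ k, m k) = -(Y - q 3) := by
    rw [hnum, mul_div_assoc, div_self (ne_of_gt hSpos), mul_one]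
  have hpow : ∀ r : ℝ, 0 < r → r * |r| ^ (-α - 2) = r ^ (-α - 1) := by
    intro r hr
    rw [abs_of_pos hr]
    calc r * r ^ (-α - 2) = r ^ (1:ℝ) * r ^ (-α - 2) := by rw [Real.rpow_one]
      _ = r ^ (1 + (-α - 2)) := (Real.rpow_add hr 1 (-α - 2)).symm
      _ = r ^ (-α - 1) := by congr 1; ring
  have hpowneg : ∀ r : ℝ, 0 < r → (-r) * |(-r)| ^ (-α - 2) = -(r ^ (-α - 1)) := by
    intro r hr
    rw [abs_neg, neg_mul, hpow r hr]
  have hQ01 : Q 0 1 = a := by rw [hQ, ha_def]; exact hpow _ hA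
  have hQ02 : Q 0 2 = b := by rw [hQ, hb_def]; exact hpow _ (by linarith)
  have hQ03 : Q 0 3 = c := by rw [hQ, hc_def]; exact hpow _ (by linarith)
  have hQ12 : Q 1 2 = d := by rw [hQ, hd_def]; exact hpow _ hB
  have hQ13 : Q 1 3 = e := by rw [hQ, he_def]; exact hpow _ (by linarith)
  have hQ23 : Q 2 3 = f := by rw [hQ, hf_def]; exact hpow _ hC
  have hQ10 : Q 1 0 = -a := by
    rw [hQ, ha_def, show q 1 - q 0 = -(q 0 - q 1) by ring]; exact hpowneg _ hA
  have hQ20 : Q 2 0 = -b := by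
    rw [hQ, hb_def, show q 2 - q 0 = -(q 0 - q 2) by ring]; exact hpowneg _ (by linarith)
  have hQ30 : Q 3 0 = -c := by
    rw [hQ, hc_def, show q 3 - q 0 = -(q 0 - q 3) by ring]; exact hpowneg _ (by linarith)
  have hQ21 : Q 2 1 = -d := by
    rw [hQ, hd_def, show q 2 - q 1 = -(q 1 - q 2) by ring]; exact hpowneg _ hB
  have hQ31 : Q 3 1 = -e := by
    rw [hQ, he_def, show q 3 - q 1 = -(q 1 - q 3) by ring]; exact hpowneg _ (by linarith)
  have hQ32 : Q 3 2 = -f := by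
    rw [hQ, hf_def, show q 3 - q 2 = -(q 2 - q 3) by ring]; exact hpowneg _ hC
  have hQdiag : ∀ j : Fin 4, Q j j = 0 := fun j => by rw [hQ]; simp
  refine ⟨m, -α * (a * f - b * e + c * d), ?_, ?_, ?_⟩
  · intro k
    fin_cases k
    · exact hm0
    · exact hm1
    · exact hm2
    · exact hm3
  · have := mul_pos hα hPf; linarith
  · intro i
    rw [Finset.sum_erase (f := fun k => m i * m k * Q i k) (a := i) Finset.univ
        (by show m i * m i * Q i i = 0; rw [hQdiag, mul_zero])]
    fin_cases i <;>
      simp only [Fin.isValue, Fin.zero_eta, Fin.mk_one, Fin.reduceFinMk]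
    · rw [Fin.sum_univ_four (fun k => m 0 * m k * Q 0 k), hq0val,
        hQdiag 0, hQ01, hQ02, hQ03, e0, e1, e2, e3]
      ring
    · rw [Fin.sum_univ_four (fun k => m 1 * m k * Q 1 k), hq0val,
        hQdiag 1, hQ10, hQ12, hQ13, e0, e1, e2, e3]
      ring
    · rw [Fin.sum_univ_four (fun k => m 2 * m k * Q 2 k), hq0val,
        hQdiag 2, hQ20, hQ21, hQ23, e0, e1, e2, e3]
      ring
    · rw [Fin.sum_univ_four (fun k => m 3 * m k * Q 3 k), hq0val,
        hQdiag 3, hQ30, hQ31, hQ32, e0, e1, e2, e3]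
      ring
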